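/- For every κ ∈ (0, 1/2) and every κ̄ ∈ (0, κ/2) there exists a constant C > 0 such that for every x ∈ ℝ³, all 0 < ε ≤ λ ≤ 1 and every ψ : ℝ³ → ℝ which is Lipschitz with Lipschitz constant at most 1, satisfies ‖ψ‖_∞ ≤ 1 and has support in the closed unit ball, one has ∫_λ^1 ∫_{ℝ³} δ^{-3/2-κ̄} ( sup_{η ∈ 𝒩} | ∫_{ℝ³} Ψ_ε^λ(v) η_u^δ(v) dv | ) du dδ ≤ C λ^{-1/2-κ} ε^{κ−2κ̄}. -/

import Mathlib

open MeasureTheory Set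

/-- The grid cube `□_ε^y = {z : z - y ∈ [-ε/2, ε/2)³}` of side `ε` centred at `y`. -/
def gridCube (ε : ℝ) (y : EuclideanSpace ℝ (Fin 3)) : Set (EuclideanSpace ℝ (Fin 3)) :=
  {z | ∀ i : Fin 3, z i - y i ∈ Ico (-(ε / 2)) (ε / 2)}

/-- `latticeOf ε v` is the unique point `y ∈ εℤ³` with `v ∈ □_ε^y`. -/
noncomputable def latticeOf (ε : ℝ) (v : EuclideanSpace ℝ (Fin 3)) :
    EuclideanSpace ℝ (Fin 3) :=
  (EuclideanSpace.equiv (Fin 3) ℝ).symm fun i => ε * (⌊v i / ε + 1 / 2⌋ : ℤ)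

/-- The rescaled and recentred test function `f_x^λ(z) = λ⁻³ f((z - x)/λ)`. -/
noncomputable def scaledTest (f : EuclideanSpace ℝ (Fin 3) → ℝ)
    (x : EuclideanSpace ℝ (Fin 3)) (lam : ℝ) : EuclideanSpace ℝ (Fin 3) → ℝ :=
  fun z => (lam ^ 3)⁻¹ * f (lam⁻¹ • (z - x))

/-- `Ψ_ε^λ(v) = ψ_x^λ(v) - ε⁻³ ∫_{□_ε^{y_ε(v)}} ψ_x^λ(z) dz`, the difference between `ψ_x^λ`
and its average over the `ε`-grid cube containing the argument. -/
noncomputable def PsiDiff (ψ : EuclideanSpace ℝ (Fin 3) → ℝ)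
    (x : EuclideanSpace ℝ (Fin 3)) (lam ε : ℝ) : EuclideanSpace ℝ (Fin 3) → ℝ :=
  fun v => scaledTest ψ x lam v
    - (ε ^ 3)⁻¹ * ∫ z in gridCube ε (latticeOf ε v), scaledTest ψ x lam z

/-- The set `𝒩` of bounded measurable test functions supported in the closed Euclidean unit
ball and bounded by 1. -/
def testSet : Set (EuclideanSpace ℝ (Fin 3) → ℝ) :=
  {η | Measurable η ∧ (∀ v, |η v| ≤ 1) ∧ Function.support η ⊆ Metric.closedBall 0 1}

/-- The subset `𝒩₀ ⊆ 𝒩` of mean-zero test functions. -/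
def testSetZero : Set (EuclideanSpace ℝ (Fin 3) → ℝ) :=
  {η ∈ testSet | (∫ v, η v) = 0}

/-!
Since `ε ≤ λ`, no cancellation is needed. The function `ψ_x^λ` is `λ⁻⁴`-Lipschitz and every grid
cube has diameter at most `2ε`, so `|Ψ_ε^λ| ≤ 2ε λ⁻⁴`, and `Ψ_ε^λ` is supported in `B(x, λ + 2ε)`.
Hence every pairing with `η_u^δ`, `δ ≥ λ`, is `O(ε λ⁻¹ δ⁻³)` and vanishes unless `|u - x| ≤ 4δ`,
so the `u`-integral is `O(ε λ⁻¹)`. Integrating `δ^{-3/2-κ̄}` over `δ > λ` gives `O(λ^{-1/2-κ̄})`,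
and `ε λ^{-3/2-κ̄} ≤ λ^{-1/2-κ} ε^{κ-2κ̄}` because `ε ≤ λ ≤ 1` and `κ < 1 + κ̄`.
-/

open Metric Real

local notation "ℝ³" => EuclideanSpace ℝ (Fin 3)

lemma norm_sub_setAverage_le {α E : Type*} [MeasurableSpace α] [NormedAddCommGroup E]
    [NormedSpace ℝ E] [CompleteSpace E] {μ : Measure α} {s : Set α} {g : α → E} {c : ℝ}
    (hs₀ : μ s ≠ 0) (hs : μ s ≠ ⊤) (hg : IntegrableOn g s μ) (v : α)
    (hc : ∀ z ∈ s, ‖g v - g z‖ ≤ c) :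
    ‖g v - ⨍ z in s, g z ∂μ‖ ≤ c := by
  have hμ : 0 < μ.real s := ENNReal.toReal_pos hs₀ hs
  have hsub : g v - ⨍ z in s, g z ∂μ = (μ.real s)⁻¹ • ∫ z in s, (g v - g z) ∂μ := by
    rw [integral_sub (integrableOn_const (C := g v) hs) hg, setIntegral_const, smul_sub,
      setAverage_eq, inv_smul_smul₀ hμ.ne']
  rw [hsub, norm_smul, Real.norm_of_nonneg (inv_nonneg.2 hμ.le), inv_mul_le_iff₀ hμ, mul_comm]
  exact norm_setIntegral_le_of_norm_le_const hs.lt_top hc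

lemma lintegral_ofReal_le_of_le_indicator {α : Type*} [MeasurableSpace α] {μ : Measure α}
    {f : α → ℝ} {s : Set α} {c : ℝ} (hs : MeasurableSet s)
    (hf : ∀ u, f u ≤ s.indicator (fun _ => c) u) :
    ∫⁻ u, ENNReal.ofReal (f u) ∂μ ≤ ENNReal.ofReal c * μ s := by
  rw [← lintegral_indicator_const hs]
  exact lintegral_mono fun u =>
    (ENNReal.ofReal_le_ofReal (hf u)).trans (by by_cases hu : u ∈ s <;> simp [hu])

lemma setLIntegral_Ioc_ofReal_mul_rpow_le {a b c q : ℝ} (ha : 0 < a) (hq : q < -1)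
    (hc : 0 ≤ c) :
    ∫⁻ δ in Ioc a b, ENNReal.ofReal (c * δ ^ q) ≤
      ENNReal.ofReal (c * (-a ^ (q + 1) / (q + 1))) := by
  calc _ ≤ ∫⁻ δ in Ioi a, ENNReal.ofReal (c * δ ^ q) := lintegral_mono_set Ioc_subset_Ioi_self
    _ = ENNReal.ofReal (∫ δ in Ioi a, c * δ ^ q) :=
        (ofReal_integral_eq_lintegral_ofReal ((integrableOn_Ioi_rpow_of_lt hq ha).const_mul c)
          (ae_restrict_of_forall_mem measurableSet_Ioi fun δ hδ =>
            mul_nonneg hc (Real.rpow_nonneg (ha.trans hδ).le q))).symm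
    _ = ENNReal.ofReal (c * (-a ^ (q + 1) / (q + 1))) := by
        rw [integral_const_mul, integral_Ioi_rpow_of_lt hq ha]

lemma div_mul_rpow_le_rpow_mul_rpow {ε lam κ κb : ℝ} (hε : 0 < ε) (hεlam : ε ≤ lam)
    (hlam1 : lam ≤ 1) (hκb : 0 ≤ κb) (hκ : κ ≤ 1 + κb) :
    ε / lam * lam ^ (-(1 : ℝ) / 2 - κb) ≤ lam ^ (-(1 : ℝ) / 2 - κ) * ε ^ (κ - 2 * κb) := by
  have hlam := hε.trans_le hεlam
  have hgain : ε ^ (1 + κb - κ + κb) ≤ lam ^ (1 + κb - κ) := by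
    rw [Real.rpow_add hε, ← mul_one (lam ^ (1 + κb - κ))]
    exact mul_le_mul (Real.rpow_le_rpow hε.le hεlam (by linarith))
      (Real.rpow_le_one hε.le (hεlam.trans hlam1) hκb) (by positivity) (by positivity)
  calc ε / lam * lam ^ (-(1 : ℝ) / 2 - κb)
      = ε ^ (1 + κb - κ + κb) * ε ^ (κ - 2 * κb) * lam ^ (-(3 : ℝ) / 2 - κb) := by
        rw [← Real.rpow_add hε, show 1 + κb - κ + κb + (κ - 2 * κb) = 1 by ring, Real.rpow_one,
          div_eq_mul_inv, mul_assoc, ← Real.rpow_neg_one, ← Real.rpow_add hlam]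
        ring_nf
    _ ≤ lam ^ (1 + κb - κ) * ε ^ (κ - 2 * κb) * lam ^ (-(3 : ℝ) / 2 - κb) := by gcongr
    _ = lam ^ (-(1 : ℝ) / 2 - κ) * ε ^ (κ - 2 * κb) := by
        rw [mul_right_comm, ← Real.rpow_add hlam]
        ring_nf

lemma mem_gridCube_latticeOf {ε : ℝ} (hε : 0 < ε) (v : ℝ³) :
    v ∈ gridCube ε (latticeOf ε v) := by
  intro i
  have h1 := Int.floor_le (v i / ε + 1 / 2)
  have h2 := Int.lt_floor_add_one (v i / ε + 1 / 2)
  have hv : v i = ε * (v i / ε) := by field_simp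
  change v i - ε * _ ∈ _
  constructor
  · nlinarith [mul_le_mul_of_nonneg_left h1 hε.le]
  · nlinarith [mul_lt_mul_of_pos_left h2 hε]

lemma dist_le_of_mem_gridCube {ε : ℝ} {y z v : ℝ³} (hz : z ∈ gridCube ε y)
    (hv : v ∈ gridCube ε y) : dist z v ≤ 2 * ε := by
  have hε : 0 ≤ ε := by linarith [(hz 0).1, (hz 0).2]
  have hcoord : ∀ i, dist (z i) (v i) ^ 2 ≤ ε ^ 2 := fun i => by
    obtain ⟨⟨hz₁, hz₂⟩, ⟨hv₁, hv₂⟩⟩ := And.intro (hz i) (hv i)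
    rw [Real.dist_eq, sq_abs]
    exact sq_le_sq' (by linarith) (by linarith)
  calc dist z v = √(∑ i, dist (z i) (v i) ^ 2) := EuclideanSpace.dist_eq z v
    _ ≤ √((2 * ε) ^ 2) := by
      gcongr
      calc ∑ i, dist (z i) (v i) ^ 2 ≤ ∑ _i : Fin 3, ε ^ 2 := Finset.sum_le_sum fun i _ => hcoord i
        _ ≤ (2 * ε) ^ 2 := by simp; nlinarith
    _ = 2 * ε := Real.sqrt_sq (by positivity)

lemma gridCube_eq_preimage (ε : ℝ) (y : ℝ³) :
    gridCube ε y = (MeasurableEquiv.toLp 2 (Fin 3 → ℝ)).symm ⁻¹'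
      (univ.pi fun i => Ico (y i - ε / 2) (y i + ε / 2)) := by
  ext z
  simp only [gridCube, mem_ofPred_eq, mem_preimage, mem_pi, mem_univ, forall_true_left, mem_Ico,
    MeasurableEquiv.toLp_symm_apply]
  constructor <;> intro h i <;> (obtain ⟨h1, h2⟩ := h i; exact ⟨by linarith, by linarith⟩)

lemma volume_gridCube {ε : ℝ} (hε : 0 ≤ ε) (y : ℝ³) :
    volume (gridCube ε y) = ENNReal.ofReal (ε ^ 3) := by
  rw [gridCube_eq_preimage, (EuclideanSpace.volume_preserving_symm_measurableEquiv_toLp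
    (Fin 3)).measure_preimage (MeasurableSet.univ_pi fun i => measurableSet_Ico).nullMeasurableSet,
    volume_pi_pi]
  simp [Real.volume_Ico, ENNReal.ofReal_pow hε]

section ScaledTest

variable {f : ℝ³ → ℝ} {x : ℝ³} {lam : ℝ}

lemma abs_scaledTest_le {M : ℝ} (hf : ∀ z, |f z| ≤ M) (hlam : 0 < lam) (v : ℝ³) :
    |scaledTest f x lam v| ≤ M / lam ^ 3 := by
  rw [scaledTest, abs_mul, abs_inv, abs_of_pos (by positivity), inv_mul_eq_div]
  gcongr
  exact hf _

lemma support_scaledTest_subset (hf : Function.support f ⊆ closedBall 0 1) (hlam : 0 < lam) :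
    Function.support (scaledTest f x lam) ⊆ closedBall x lam := by
  intro v hv
  have hmem := hf (right_ne_zero_of_mul hv)
  rw [mem_closedBall_zero_iff, norm_smul, norm_inv, Real.norm_of_nonneg hlam.le,
    inv_mul_le_iff₀ hlam, mul_one] at hmem
  rwa [mem_closedBall, dist_eq_norm]

lemma abs_scaledTest_sub_scaledTest_le {K : NNReal} (hf : LipschitzWith K f) (hlam : 0 < lam)
    (v z : ℝ³) :
    |scaledTest f x lam v - scaledTest f x lam z| ≤ K / lam ^ 4 * dist v z := by
  have hdist : dist (lam⁻¹ • (v - x)) (lam⁻¹ • (z - x)) = lam⁻¹ * dist v z := by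
    rw [dist_smul₀, dist_sub_right, Real.norm_of_nonneg (inv_nonneg.2 hlam.le)]
  calc |scaledTest f x lam v - scaledTest f x lam z|
      = (lam ^ 3)⁻¹ * dist (f (lam⁻¹ • (v - x))) (f (lam⁻¹ • (z - x))) := by
        rw [scaledTest, scaledTest, ← mul_sub, abs_mul, abs_of_pos (by positivity), Real.dist_eq]
    _ ≤ (lam ^ 3)⁻¹ * (K * (lam⁻¹ * dist v z)) := by
        gcongr
        exact hdist ▸ hf.dist_le_mul _ _
    _ = K / lam ^ 4 * dist v z := by field_simp

lemma LipschitzWith.continuous_scaledTest {K : NNReal} (hf : LipschitzWith K f) :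
    Continuous (scaledTest f x lam) :=
  continuous_const.mul (hf.continuous.comp (by fun_prop))

end ScaledTest

section PsiDiff

variable {ψ : ℝ³ → ℝ} {x : ℝ³} {lam ε : ℝ}

lemma psiDiff_eq_sub_setAverage (hε : 0 < ε) (v : ℝ³) :
    PsiDiff ψ x lam ε v =
      scaledTest ψ x lam v - ⨍ z in gridCube ε (latticeOf ε v), scaledTest ψ x lam z := by
  rw [PsiDiff, setAverage_eq, measureReal_def, volume_gridCube hε.le,
    ENNReal.toReal_ofReal (by positivity), smul_eq_mul]

lemma abs_psiDiff_le {K : NNReal} (hψ : LipschitzWith K ψ) (hbd : ∀ z, |ψ z| ≤ 1)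
    (hlam : 0 < lam) (hε : 0 < ε) (v : ℝ³) :
    |PsiDiff ψ x lam ε v| ≤ 2 * K * ε / lam ^ 4 := by
  have hv := mem_gridCube_latticeOf hε v
  have hvol : volume (gridCube ε (latticeOf ε v)) = ENNReal.ofReal (ε ^ 3) :=
    volume_gridCube hε.le _
  have hint : IntegrableOn (scaledTest ψ x lam) (gridCube ε (latticeOf ε v)) :=
    Measure.integrableOn_of_bounded (hvol ▸ ENNReal.ofReal_ne_top)
      hψ.continuous_scaledTest.aestronglyMeasurable
      (ae_of_all _ fun z => (abs_scaledTest_le hbd hlam z :))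
  rw [psiDiff_eq_sub_setAverage hε, ← Real.norm_eq_abs]
  refine norm_sub_setAverage_le (by simp [hvol, hε]) (by simp [hvol]) hint v fun z hz => ?_
  calc ‖scaledTest ψ x lam v - scaledTest ψ x lam z‖ ≤ K / lam ^ 4 * dist v z :=
        abs_scaledTest_sub_scaledTest_le hψ hlam v z
    _ ≤ K / lam ^ 4 * (2 * ε) := by gcongr; exact dist_le_of_mem_gridCube hv hz
    _ = 2 * K * ε / lam ^ 4 := by ring

lemma support_psiDiff_subset (hsupp : Function.support ψ ⊆ closedBall 0 1) (hlam : 0 < lam)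
    (hε : 0 < ε) : Function.support (PsiDiff ψ x lam ε) ⊆ closedBall x (lam + 2 * ε) := by
  intro v hv
  by_contra hfar
  rw [mem_closedBall, not_le] at hfar
  have hv' := mem_gridCube_latticeOf hε v
  have hzero : ∀ z ∈ gridCube ε (latticeOf ε v), scaledTest ψ x lam z = 0 := fun z hz =>
    Function.notMem_support.1 fun hz' => by
      linarith [mem_closedBall.1 (support_scaledTest_subset hsupp hlam hz'),
        dist_le_of_mem_gridCube hv' hz, dist_triangle v z x]
  exact hv (by rw [PsiDiff, hzero v hv', setIntegral_eq_zero_of_forall_eq_zero hzero, mul_zero,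
    sub_zero])

end PsiDiff

section Pairing

variable {ψ η : ℝ³ → ℝ} {x u : ℝ³} {lam ε δ : ℝ} {K : NNReal}

lemma abs_integral_psiDiff_mul_scaledTest_le (hψ : LipschitzWith K ψ) (hbd : ∀ z, |ψ z| ≤ 1)
    (hsupp : Function.support ψ ⊆ closedBall 0 1) (hε : 0 < ε) (hεlam : ε ≤ lam)
    (hη : η ∈ testSet) (hδ : 0 < δ) :
    |∫ v, PsiDiff ψ x lam ε v * scaledTest η u δ v| ≤ 72 * π * K * ε / (lam * δ ^ 3) := by
  have hlam := hε.trans_le hεlam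
  have hout : ∀ v ∉ closedBall x (3 * lam), PsiDiff ψ x lam ε v * scaledTest η u δ v = 0 :=
    fun v hv => by
      rw [Function.notMem_support.1 fun h => hv <| closedBall_subset_closedBall (by linarith)
        (support_psiDiff_subset hsupp hlam hε h), zero_mul]
  rw [← setIntegral_eq_integral_of_forall_compl_eq_zero hout, ← Real.norm_eq_abs]
  calc _ ≤ 2 * K * ε / lam ^ 4 * (1 / δ ^ 3) * volume.real (closedBall x (3 * lam)) :=
        norm_setIntegral_le_of_norm_le_const measure_closedBall_lt_top fun v _ => by
          rw [Real.norm_eq_abs, abs_mul]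
          exact mul_le_mul (abs_psiDiff_le hψ hbd hlam hε v) (abs_scaledTest_le hη.2.1 hδ v)
            (abs_nonneg _) (by positivity)
    _ = 72 * π * K * ε / (lam * δ ^ 3) := by
        rw [measureReal_def, EuclideanSpace.volume_closedBall_fin_three, ENNReal.toReal_mul,
          ENNReal.toReal_pow, ENNReal.toReal_ofReal (by positivity),
          ENNReal.toReal_ofReal (by positivity)]
        field_simp
        ring

lemma integral_psiDiff_mul_scaledTest_eq_zero (hsupp : Function.support ψ ⊆ closedBall 0 1)
    (hε : 0 < ε) (hεlam : ε ≤ lam) (hη : η ∈ testSet) (hδ : lam ≤ δ) (hu : 4 * δ < dist u x) :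
    ∫ v, PsiDiff ψ x lam ε v * scaledTest η u δ v = 0 := by
  have hlam := hε.trans_le hεlam
  refine integral_eq_zero_of_ae (ae_of_all _ fun v => ?_)
  by_contra hne
  have hΨ := mem_closedBall.1 (support_psiDiff_subset hsupp hlam hε (left_ne_zero_of_mul hne))
  have hη' := mem_closedBall.1
    (support_scaledTest_subset hη.2.2 (hlam.trans_le hδ) (right_ne_zero_of_mul hne))
  linarith [dist_triangle u v x, dist_comm u v]

lemma iSup_abs_integral_psiDiff_mul_scaledTest_le_indicator (hψ : LipschitzWith K ψ)
    (hbd : ∀ z, |ψ z| ≤ 1) (hsupp : Function.support ψ ⊆ closedBall 0 1) (hε : 0 < ε)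
    (hεlam : ε ≤ lam) (hδ : lam ≤ δ) (u : ℝ³) :
    ⨆ η ∈ testSet, |∫ v, PsiDiff ψ x lam ε v * scaledTest η u δ v| ≤
      (closedBall x (4 * δ)).indicator (fun _ => 72 * π * K * ε / (lam * δ ^ 3)) u := by
  have hlam := hε.trans_le hεlam
  have hδ₀ := hlam.trans_le hδ
  have hB : 0 ≤ (closedBall x (4 * δ)).indicator (fun _ => 72 * π * K * ε / (lam * δ ^ 3)) u :=
    indicator_nonneg (fun _ _ => by positivity) u
  refine Real.iSup_le (fun η => Real.iSup_le (fun hη => ?_) hB) hB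
  by_cases hu : u ∈ closedBall x (4 * δ)
  · rw [indicator_of_mem hu]
    exact abs_integral_psiDiff_mul_scaledTest_le hψ hbd hsupp hε hεlam hη hδ₀
  · rw [indicator_of_notMem hu, integral_psiDiff_mul_scaledTest_eq_zero hsupp hε hεlam hη hδ
      (not_le.1 (mt mem_closedBall.2 hu)), abs_zero]

lemma lintegral_ofReal_mul_iSup_abs_integral_psiDiff_mul_scaledTest_le {w : ℝ}
    (hψ : LipschitzWith K ψ) (hbd : ∀ z, |ψ z| ≤ 1) (hsupp : Function.support ψ ⊆ closedBall 0 1)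
    (hε : 0 < ε) (hεlam : ε ≤ lam) (hδ : lam ≤ δ) (hw : 0 ≤ w) :
    ∫⁻ u : ℝ³, ENNReal.ofReal
        (w * ⨆ η ∈ testSet, |∫ v, PsiDiff ψ x lam ε v * scaledTest η u δ v|) ≤
      ENNReal.ofReal (6144 * π ^ 2 * K * ε / lam * w) := by
  have hlam := hε.trans_le hεlam
  have hδ₀ := hlam.trans_le hδ
  simp_rw [ENNReal.ofReal_mul hw]
  rw [lintegral_const_mul' _ _ ENNReal.ofReal_ne_top]
  calc _ ≤ ENNReal.ofReal w * (ENNReal.ofReal (72 * π * K * ε / (lam * δ ^ 3)) *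
        volume (closedBall x (4 * δ))) := by
        gcongr
        exact lintegral_ofReal_le_of_le_indicator measurableSet_closedBall
          (iSup_abs_integral_psiDiff_mul_scaledTest_le_indicator hψ hbd hsupp hε hεlam hδ)
    _ = ENNReal.ofReal (6144 * π ^ 2 * K * ε / lam * w) := by
        rw [EuclideanSpace.volume_closedBall_fin_three, ← ENNReal.ofReal_pow (by positivity),
          ← ENNReal.ofReal_mul (by positivity), ← ENNReal.ofReal_mul (by positivity),
          ← ENNReal.ofReal_mul hw]
        congr 1
        field_simp
        ring

end Pairing

/-- Large-scale regime (`λ ≤ δ ≤ 1`) of the Besov `B^{1/2+κ̄}_{1,1}` bound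
on `Ψ_ε^λ`: testing against rescaled test functions `η_u^δ` at scales `λ ≤ δ ≤ 1` yields a
total contribution of order `λ^{-1/2-κ} ε^{κ-2κ̄}`. -/
theorem besov_bound_large_scales :
    ∀ κ κb : ℝ, κ ∈ Ioo (0 : ℝ) (1 / 2) → κb ∈ Ioo (0 : ℝ) (κ / 2) →
      ∃ C : ℝ, 0 < C ∧
        ∀ (x : EuclideanSpace ℝ (Fin 3)) (ε lam : ℝ), 0 < ε → ε ≤ lam → lam ≤ 1 →
          ∀ ψ : EuclideanSpace ℝ (Fin 3) → ℝ,
            LipschitzWith 1 ψ → (∀ z, |ψ z| ≤ 1) →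
            Function.support ψ ⊆ Metric.closedBall 0 1 →
            (∫⁻ δ in Ioc lam (1 : ℝ), ∫⁻ u : EuclideanSpace ℝ (Fin 3),
                ENNReal.ofReal (δ ^ (-(3 : ℝ) / 2 - κb) *
                  ⨆ η ∈ testSet, |∫ v, PsiDiff ψ x lam ε v * scaledTest η u δ v|))
              ≤ ENNReal.ofReal (C * lam ^ (-(1 : ℝ) / 2 - κ) * ε ^ (κ - 2 * κb)) := by
  rintro κ κb ⟨-, hκ⟩ ⟨hκb₀, -⟩
  refine ⟨12288 * π ^ 2, by positivity, fun x ε lam hε hεlam hlam1 ψ hψ hbd hsupp => ?_⟩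
  have hlam := hε.trans_le hεlam
  set q : ℝ := -(3 : ℝ) / 2 - κb with hq_def
  have hq : q < -1 := by linarith
  have hδint : -lam ^ (q + 1) / (q + 1) ≤ 2 * lam ^ (-(1 : ℝ) / 2 - κb) := by
    rw [show q + 1 = -(1 : ℝ) / 2 - κb by ring, div_le_iff_of_neg (by linarith)]
    nlinarith [Real.rpow_nonneg hlam.le (-(1 : ℝ) / 2 - κb)]
  calc _ ≤ ∫⁻ δ in Ioc lam 1, ENNReal.ofReal (6144 * π ^ 2 * ε / lam * δ ^ q) :=
        setLIntegral_mono' measurableSet_Ioc fun δ hδ => by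
          simpa using lintegral_ofReal_mul_iSup_abs_integral_psiDiff_mul_scaledTest_le hψ hbd hsupp
            hε hεlam hδ.1.le (Real.rpow_nonneg (hlam.trans hδ.1).le q)
    _ ≤ ENNReal.ofReal (6144 * π ^ 2 * ε / lam * (-lam ^ (q + 1) / (q + 1))) :=
        setLIntegral_Ioc_ofReal_mul_rpow_le hlam hq (by positivity)
    _ ≤ ENNReal.ofReal (12288 * π ^ 2 * lam ^ (-(1 : ℝ) / 2 - κ) * ε ^ (κ - 2 * κb)) := by
        refine ENNReal.ofReal_le_ofReal ?_
        calc 6144 * π ^ 2 * ε / lam * (-lam ^ (q + 1) / (q + 1))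
            ≤ 6144 * π ^ 2 * ε / lam * (2 * lam ^ (-(1 : ℝ) / 2 - κb)) := by gcongr
          _ = 12288 * π ^ 2 * (ε / lam * lam ^ (-(1 : ℝ) / 2 - κb)) := by ring
          _ ≤ 12288 * π ^ 2 * (lam ^ (-(1 : ℝ) / 2 - κ) * ε ^ (κ - 2 * κb)) := by
              gcongr _ * ?_
              exact div_mul_rpow_le_rpow_mul_rpow hε hεlam hlam1 hκb₀.le (by linarith)
          _ = 12288 * π ^ 2 * lam ^ (-(1 : ℝ) / 2 - κ) * ε ^ (κ - 2 * κb) := by ring
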